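/- Let A: X ⇉ X* be maximal monotone and at most single-valued, with dom A a linear subspace on which A is linear and symmetric. Define f: X → (−∞,+∞] by f(x) = sup_{y ∈ dom A} ( ⟨x,Ay⟩ − ½⟨y,Ay⟩ ). Then dom A = dom f if and only if every sequence (xₙ) in dom A such that (xₙ) converges in X and (⟨xₙ,Axₙ⟩) converges in ℝ satisfies lim xₙ ∈ dom A. -/

import Mathlib

noncomputable section
open scoped Classical
open Filter Topology

/-- A set-valued operator `A : X ⇉ X*` is monotone. -/
def MonotoneOp {X : Type*} [NormedAddCommGroup X] [NormedSpace ℝ X]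
    (A : X → Set (X →L[ℝ] ℝ)) : Prop :=
  ∀ ⦃x y : X⦄ ⦃x' y' : X →L[ℝ] ℝ⦄, x' ∈ A x → y' ∈ A y → 0 ≤ (x' - y') (x - y)

/-- A set-valued operator is maximal monotone if it is monotone and admits no proper
monotone extension (in the sense of graph inclusion). -/
def MaximalMonotoneOp {X : Type*} [NormedAddCommGroup X] [NormedSpace ℝ X]
    (A : X → Set (X →L[ℝ] ℝ)) : Prop :=
  MonotoneOp A ∧ ∀ B : X → Set (X →L[ℝ] ℝ), MonotoneOp B → (∀ x, A x ⊆ B x) → B = A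

/-- The Phelps–Simons function `f(x) = sup_{y ∈ dom A} (⟨x,Ay⟩ - ½⟨y,Ay⟩)` associated
with an at most single-valued `A : X ⇉ X*`. -/
def phelpsF {X : Type*} [NormedAddCommGroup X] [NormedSpace ℝ X]
    (A : X → Set (X →L[ℝ] ℝ)) : X → EReal :=
  fun x => ⨆ q : X × (X →L[ℝ] ℝ), ⨆ _ : q.2 ∈ A q.1,
    ((q.2 x - 1 / 2 * q.2 q.1 : ℝ) : EReal)

/-- The quadratic function `q_A(x) = ½⟨x,Ax⟩` for `x ∈ dom A`, `+∞` otherwise,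
associated with an at most single-valued `A : X ⇉ X*`. -/
def qOp {X : Type*} [NormedAddCommGroup X] [NormedSpace ℝ X]
    (A : X → Set (X →L[ℝ] ℝ)) : X → EReal :=
  fun x => if h : (A x).Nonempty then ((1 / 2 * h.choose x : ℝ) : EReal) else ⊤

/-- The Fenchel conjugate of an extended-real-valued `g : X → (-∞,+∞]`:
`g*(x*) = sup_x (⟨x,x*⟩ - g(x))`. -/
def econj {X : Type*} [NormedAddCommGroup X] [NormedSpace ℝ X]
    (g : X → EReal) : (X →L[ℝ] ℝ) → EReal :=
  fun x' => ⨆ x : X, ((x' x : ℝ) : EReal) - g x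

/-- The biconjugate of `g : X → (-∞,+∞]` (computed on `X`, using reflexivity):
`g**(x) = sup_{x*} (⟨x,x*⟩ - g*(x*))`. -/
def ebiconj {X : Type*} [NormedAddCommGroup X] [NormedSpace ℝ X]
    (g : X → EReal) : X → EReal :=
  fun x => ⨆ x' : X →L[ℝ] ℝ, ((x' x : ℝ) : EReal) - econj g x'

/-!
Write `q(y) = ½⟨y, Ay⟩` on `dom A`. Monotonicity and symmetry give `⟨x, Ay⟩ - q(y) ≤ q(x)`,
so `f ≤ q` on `dom A` and `f(lim xₙ) ≤ lim q(xₙ)` along the sequences of the statement; this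
gives `dom A ⊆ dom f` and the forward implication.

Conversely, let `f(x) ≤ s`. Linearity, symmetry and monotonicity make the epigraph of `q`
convex. Maximality yields, for every `x* ∈ X*`, a point `(y, Ay)` of the graph with
`⟨x* - Ay, x - y⟩ ≤ 0`, which rearranges to the Fenchel–Young inequality
`⟨x, x*⟩ ≤ f(x) + q*(x*)`. A functional separating `(x, s)` from the closed epigraph would,
suitably rescaled, violate it; so `(x, s)` lies in that closure, i.e. some `yₙ → x` in `dom A`
has `q(yₙ)` bounded, and passing to a subsequence along which `q(yₙ)` converges, the
sequential hypothesis puts `x` in `dom A`.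
-/

section PhelpsSimons

variable {X : Type*} [NormedAddCommGroup X] [NormedSpace ℝ X] {A : X → Set (X →L[ℝ] ℝ)}

def SymmetricOp (A : X → Set (X →L[ℝ] ℝ)) : Prop :=
  ∀ (x y : X) (x' y' : X →L[ℝ] ℝ), x' ∈ A x → y' ∈ A y → x' y = y' x

def quadraticEpigraph (A : X → Set (X →L[ℝ] ℝ)) : Set (X × ℝ) :=
  {p | ∃ x' ∈ A p.1, 1 / 2 * x' p.1 ≤ p.2}

theorem phelpsF_le_coe_iff {x : X} {M : ℝ} :
    phelpsF A x ≤ M ↔ ∀ (y : X) (y' : X →L[ℝ] ℝ), y' ∈ A y → y' x - 1 / 2 * y' y ≤ M := by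
  simp only [phelpsF, iSup_le_iff, EReal.coe_le_coe_iff, Prod.forall]

theorem MonotoneOp.apply_self_nonneg (hA : MonotoneOp A) (h0 : (0 : X →L[ℝ] ℝ) ∈ A 0)
    {x : X} {x' : X →L[ℝ] ℝ} (hx : x' ∈ A x) : 0 ≤ x' x := by
  simpa using hA hx h0

theorem MonotoneOp.apply_sub_half_le (hA : MonotoneOp A) (hsym : SymmetricOp A)
    {x y : X} {x' y' : X →L[ℝ] ℝ} (hx : x' ∈ A x) (hy : y' ∈ A y) :
    y' x - 1 / 2 * y' y ≤ 1 / 2 * x' x := by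
  have hmono := hA hx hy
  simp only [sub_apply, map_sub] at hmono
  linarith [hsym x y x' y' hx hy]

theorem phelpsF_le_of_mem (hA : MonotoneOp A) (hsym : SymmetricOp A) {x : X}
    {x' : X →L[ℝ] ℝ} (hx : x' ∈ A x) : phelpsF A x ≤ ↑(1 / 2 * x' x) :=
  phelpsF_le_coe_iff.2 fun _ _ hy => hA.apply_sub_half_le hsym hx hy

theorem phelpsF_le_of_tendsto (hA : MonotoneOp A) (hsym : SymmetricOp A) {x : ℕ → X}
    {x' : ℕ → X →L[ℝ] ℝ} (hx : ∀ n, x' n ∈ A (x n)) {l : X} {r : ℝ}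
    (hl : Tendsto x atTop (𝓝 l)) (hr : Tendsto (fun n => x' n (x n)) atTop (𝓝 r)) :
    phelpsF A l ≤ ↑(1 / 2 * r) :=
  phelpsF_le_coe_iff.2 fun _ y' hy =>
    le_of_tendsto_of_tendsto' (((y'.continuous.tendsto l).comp hl).sub_const _)
      (hr.const_mul _) fun n => hA.apply_sub_half_le hsym (hx n) hy

theorem MaximalMonotoneOp.mem_of_forall_nonneg (hA : MaximalMonotoneOp A) {x : X}
    {x' : X →L[ℝ] ℝ} (h : ∀ (y : X) (y' : X →L[ℝ] ℝ), y' ∈ A y → 0 ≤ (x' - y') (x - y)) :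
    x' ∈ A x := by
  set B : X → Set (X →L[ℝ] ℝ) := fun y => A y ∪ {y' | y = x ∧ y' = x'}
  have hB : MonotoneOp B := by
    rintro y z y' z' (hy | ⟨rfl, rfl⟩) (hz | ⟨rfl, rfl⟩)
    · exact hA.1 hy hz
    · convert h y y' hy using 1
      simp only [sub_apply, map_sub]
      ring
    · exact h z z' hz
    · simp
  rw [← hA.2 B hB fun _ => Set.subset_union_left]
  exact Or.inr ⟨rfl, rfl⟩

theorem MaximalMonotoneOp.exists_apply_sub_nonpos (hA : MaximalMonotoneOp A) (x : X)
    (x' : X →L[ℝ] ℝ) : ∃ (y : X) (y' : X →L[ℝ] ℝ), y' ∈ A y ∧ (x' - y') (x - y) ≤ 0 := by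
  by_contra! h
  simpa using h x x' (hA.mem_of_forall_nonneg fun y y' hy => (h y y' hy).le)

/-- Fenchel–Young inequality `⟨x, x*⟩ ≤ f(x) + q*(x*)`, with `σ ≥ q*(x*)`. -/
theorem MaximalMonotoneOp.apply_le_add (hA : MaximalMonotoneOp A) {x : X}
    {x' : X →L[ℝ] ℝ} {s σ : ℝ} (hs : phelpsF A x ≤ s)
    (hσ : ∀ (y : X) (y' : X →L[ℝ] ℝ), y' ∈ A y → x' y - 1 / 2 * y' y ≤ σ) :
    x' x ≤ s + σ := by
  obtain ⟨y, y', hy, hle⟩ := hA.exists_apply_sub_nonpos x x'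
  simp only [sub_apply, map_sub] at hle
  linarith [phelpsF_le_coe_iff.1 hs y y' hy, hσ y y' hy]

theorem convex_quadraticEpigraph (hA : MonotoneOp A) (hsym : SymmetricOp A)
    (hadd : ∀ (x y : X) (x' y' : X →L[ℝ] ℝ), x' ∈ A x → y' ∈ A y → x' + y' ∈ A (x + y))
    (hsmul : ∀ (c : ℝ) (x : X) (x' : X →L[ℝ] ℝ), x' ∈ A x → c • x' ∈ A (c • x)) :
    Convex ℝ (quadraticEpigraph A) := by
  rintro ⟨y, t⟩ ⟨y', hy, ht⟩ ⟨z, r⟩ ⟨z', hz, hr⟩ a b ha hb hab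
  refine ⟨a • y' + b • z', hadd _ _ _ _ (hsmul a _ _ hy) (hsmul b _ _ hz), ?_⟩
  have hmono := hA hy hz
  simp only [sub_apply, map_sub] at hmono
  simp only [Prod.fst_add, Prod.snd_add, Prod.smul_fst, Prod.smul_snd, add_apply, smul_apply,
    map_add, map_smul, smul_eq_mul] at ht hr ⊢
  obtain rfl : b = 1 - a := by linarith
  rw [hsym y z y' z' hy hz] at hmono ⊢
  nlinarith [mul_nonneg (mul_nonneg ha hb) hmono, mul_le_mul_of_nonneg_left ht ha,
    mul_le_mul_of_nonneg_left hr hb]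

theorem StrongDual.apply_prod_eq (g : StrongDual ℝ (X × ℝ)) (p : X × ℝ) :
    g p = g.comp (ContinuousLinearMap.inl ℝ X ℝ) p.1 + g (0, 1) * p.2 := by
  calc g p = g ((p.1, 0) + p.2 • ((0 : X), (1 : ℝ))) := by congr 1; ext <;> simp
    _ = _ := by rw [map_add, map_smul, smul_eq_mul, mul_comm]; rfl

theorem mem_closure_quadraticEpigraph (hA : MaximalMonotoneOp A)
    (h0 : (0 : X →L[ℝ] ℝ) ∈ A 0) (hsym : SymmetricOp A)
    (hadd : ∀ (x y : X) (x' y' : X →L[ℝ] ℝ), x' ∈ A x → y' ∈ A y → x' + y' ∈ A (x + y))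
    (hsmul : ∀ (c : ℝ) (x : X) (x' : X →L[ℝ] ℝ), x' ∈ A x → c • x' ∈ A (c • x))
    {x : X} {s : ℝ} (hs : phelpsF A x ≤ s) : (x, s) ∈ closure (quadraticEpigraph A) := by
  by_contra hx
  obtain ⟨g, u, hgx, hgK⟩ := geometric_hahn_banach_point_closed
    (convex_quadraticEpigraph hA.1 hsym hadd hsmul).closure isClosed_closure hx
  set L := g.comp (ContinuousLinearMap.inl ℝ X ℝ)
  set β := g (0, 1)
  have hK : ∀ p ∈ quadraticEpigraph A, u < L p.1 + β * p.2 := fun p hp => by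
    have := hgK p (subset_closure hp)
    rwa [g.apply_prod_eq] at this
  have hK0 : ∀ t : ℝ, 0 ≤ t → u < β * t := fun t ht => by
    simpa using hK (0, t) ⟨0, h0, by simpa using ht⟩
  have hu : u < 0 := by simpa using hK0 0 le_rfl
  have hβ : 0 ≤ β := by
    by_contra! hβ
    have := hK0 (u / β) (div_nonneg_of_nonpos hu.le hβ.le)
    rw [mul_div_cancel₀ u hβ.ne] at this
    exact lt_irrefl u this
  have hs0 : 0 ≤ s := by simpa using phelpsF_le_coe_iff.1 hs 0 0 h0
  rw [g.apply_prod_eq] at hgx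
  -- For `c * β ≤ 1` the separation gives `q*(-c • L) ≤ -c * u`, as `q ≥ 0`.
  have hbound : ∀ c : ℝ, 0 < c → c * β ≤ 1 → c * (u - L x) ≤ s := fun c hc hcβ => by
    have := hA.apply_le_add (x' := -c • L) hs (σ := -c * u) fun y y' hy => by
      have hyK := hK (y, 1 / 2 * y' y) ⟨y', hy, le_rfl⟩
      have hy0 := hA.1.apply_self_nonneg h0 hy
      simp only [smul_apply, smul_eq_mul, neg_mul] at hyK ⊢
      nlinarith [mul_lt_mul_of_pos_left hyK hc]
    simp only [smul_apply, smul_eq_mul] at this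
    linarith
  set δ := u - L x - β * s
  have hδ : 0 < δ := by simp only [δ]; linarith
  have hden : 0 < β * (s + 1) + δ := by positivity
  -- `c = 1 / (β + δ / (s + 1))` has `c * β ≤ 1` but `c * (u - L x) = c * (β * s + δ) > s`.
  have := hbound ((s + 1) / (β * (s + 1) + δ)) (by positivity)
    (by rw [div_mul_eq_mul_div, div_le_one hden]; nlinarith)
  rw [div_mul_eq_mul_div, div_le_iff₀ hden] at this
  nlinarith

theorem exists_seq_of_mem_closure_quadraticEpigraph (hA : MonotoneOp A)
    (h0 : (0 : X →L[ℝ] ℝ) ∈ A 0) {x : X} {s : ℝ}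
    (hx : (x, s) ∈ closure (quadraticEpigraph A)) :
    ∃ (y : ℕ → X) (y' : ℕ → X →L[ℝ] ℝ), (∀ n, y' n ∈ A (y n)) ∧
      Tendsto y atTop (𝓝 x) ∧ ∃ r : ℝ, Tendsto (fun n => y' n (y n)) atTop (𝓝 r) := by
  obtain ⟨p, hpK, hp⟩ := mem_closure_iff_seq_limit.1 hx
  choose y' hy' hle using hpK
  obtain ⟨M, hM⟩ := hp.snd_nhds.bddAbove_range
  have hbdd : ∀ n, y' n (p n).1 ∈ Set.Icc 0 (2 * M) := fun n =>
    ⟨hA.apply_self_nonneg h0 (hy' n), by linarith [hle n, hM (Set.mem_range_self n)]⟩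
  obtain ⟨r, -, φ, hφ, hr⟩ := tendsto_subseq_of_bounded (Metric.isBounded_Icc _ _) hbdd
  exact ⟨fun n => (p (φ n)).1, y' ∘ φ, fun n => hy' (φ n),
    (continuous_fst.tendsto _).comp (hp.comp hφ.tendsto_atTop), r, hr⟩

end PhelpsSimons

theorem stmt17_general {X : Type*} [NormedAddCommGroup X] [NormedSpace ℝ X]
    (A : X → Set (X →L[ℝ] ℝ))
    (hmax : MaximalMonotoneOp A)
    (hsingle : ∀ x, (A x).Subsingleton)
    (hdom : ∃ V : Submodule ℝ X, (V : Set X) = {x | (A x).Nonempty})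
    (hadd : ∀ (x y : X) (x' y' : X →L[ℝ] ℝ), x' ∈ A x → y' ∈ A y → x' + y' ∈ A (x + y))
    (hsmul : ∀ (c : ℝ) (x : X) (x' : X →L[ℝ] ℝ), x' ∈ A x → c • x' ∈ A (c • x))
    (hsym : ∀ (x y : X) (x' y' : X →L[ℝ] ℝ), x' ∈ A x → y' ∈ A y → x' y = y' x) :
    {x : X | (A x).Nonempty} = {x : X | phelpsF A x ≠ ⊤}
      ↔ ∀ (x : ℕ → X) (l : X) (hx : ∀ n, (A (x n)).Nonempty),
          Tendsto x atTop (𝓝 l) →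
          (∃ r : ℝ, Tendsto (fun n => ((hx n).choose) (x n)) atTop (𝓝 r)) →
          (A l).Nonempty := by
  have h0 : (0 : X →L[ℝ] ℝ) ∈ A 0 := by
    obtain ⟨V, hV⟩ := hdom
    obtain ⟨z, hz⟩ : (0 : X) ∈ {x | (A x).Nonempty} := hV ▸ V.zero_mem
    simpa using hsmul 0 0 z hz
  constructor
  · rintro hdomf x l hx hl ⟨r, hr⟩
    exact (Set.ext_iff.1 hdomf l).2 <| ne_top_of_le_ne_top (EReal.coe_ne_top _)
      (phelpsF_le_of_tendsto hmax.1 hsym (fun n => (hx n).choose_spec) hl hr)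
  · refine fun H => Set.Subset.antisymm (fun x ⟨x', hx⟩ => ?_) fun x hx => ?_
    · exact ne_top_of_le_ne_top (EReal.coe_ne_top _) (phelpsF_le_of_mem hmax.1 hsym hx)
    obtain ⟨y, y', hy', hy, r, hr⟩ := exists_seq_of_mem_closure_quadraticEpigraph hmax.1 h0
      (mem_closure_quadraticEpigraph hmax h0 hsym hadd hsmul (EReal.le_coe_toReal hx))
    have hchoose : ∀ n, (⟨y' n, hy' n⟩ : (A (y n)).Nonempty).choose = y' n := fun n =>
      hsingle _ (Exists.choose_spec _) (hy' n)
    exact H y x (fun n => ⟨y' n, hy' n⟩) hy ⟨r, by simpa only [hchoose] using hr⟩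

/-- Proposition 6.3. Let `A : X ⇉ X*` be maximal monotone, at most
single-valued, with `dom A` a linear subspace on which `A` is linear and symmetric, and
let `f` be the Phelps–Simons function of `A`. Then `dom A = dom f` if and only if every
sequence `(xₙ)` in `dom A` that converges in `X` and for which `(⟨xₙ,Axₙ⟩)` converges in
`ℝ` has its limit in `dom A`. -/
theorem stmt17 {X : Type*} [NormedAddCommGroup X] [NormedSpace ℝ X] [CompleteSpace X]
    (hrefl : Function.Surjective (NormedSpace.inclusionInDoubleDual ℝ X))
    (A : X → Set (X →L[ℝ] ℝ))
    (hmax : MaximalMonotoneOp A)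
    (hsingle : ∀ x, (A x).Subsingleton)
    (hdom : ∃ V : Submodule ℝ X, (V : Set X) = {x | (A x).Nonempty})
    (hadd : ∀ (x y : X) (x' y' : X →L[ℝ] ℝ), x' ∈ A x → y' ∈ A y → x' + y' ∈ A (x + y))
    (hsmul : ∀ (c : ℝ) (x : X) (x' : X →L[ℝ] ℝ), x' ∈ A x → c • x' ∈ A (c • x))
    (hsym : ∀ (x y : X) (x' y' : X →L[ℝ] ℝ), x' ∈ A x → y' ∈ A y → x' y = y' x) :
    {x : X | (A x).Nonempty} = {x : X | phelpsF A x ≠ ⊤}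
      ↔ ∀ (x : ℕ → X) (l : X) (hx : ∀ n, (A (x n)).Nonempty),
          Tendsto x atTop (𝓝 l) →
          (∃ r : ℝ, Tendsto (fun n => ((hx n).choose) (x n)) atTop (𝓝 r)) →
          (A l).Nonempty :=
  stmt17_general A hmax hsingle hdom hadd hsmul hsym
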